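/- arXiv:2509.21705 — 5 statements merged into one kernel-verified Lean document; each statement's English description precedes it below -/
import Mathlib

section
/- For every integer m ≥ 1, the graph G_m is ternary; that is, G_m contains no induced cycle whose length is divisible by 3. -/
/-- The vertex set of the graph `Gₘ`: `Sum.inl i` is the vertex `a_{i+1}` (for `0 ≤ i < m`),
`Sum.inr (Sum.inl i)` is `b_{i+1}`, and `Sum.inr (Sum.inr j)` is `c_{j+2}`. -/
abbrev GV (m : ℕ) := Fin m ⊕ Fin m ⊕ Fin (m - 1)

/-- The vertex `a_{i+1}` of `Gₘ`. -/
def aV {m : ℕ} (i : Fin m) : GV m := Sum.inl i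
/-- The vertex `b_{i+1}` of `Gₘ`. -/
def bV {m : ℕ} (i : Fin m) : GV m := Sum.inr (Sum.inl i)
/-- The vertex `c_{j+2}` of `Gₘ`. -/
def cV {m : ℕ} (j : Fin (m - 1)) : GV m := Sum.inr (Sum.inr j)

/-- Half of the adjacency relation of `Gₘ` (the full relation is its symmetrization):
the edges `a_i a_{i+1}`, `a_i b_i`, `b_i c_{i+1}`, `b_i c_i`, `c_i a_{i+1}` (1-based indices). -/
def adjHalf (m : ℕ) : GV m → GV m → Bool
  | Sum.inl i, Sum.inl j => decide (i.val + 1 = j.val)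
  | Sum.inl i, Sum.inr (Sum.inl j) => decide (i = j)
  | Sum.inl _, Sum.inr (Sum.inr _) => false
  | Sum.inr (Sum.inl _), Sum.inl _ => false
  | Sum.inr (Sum.inl _), Sum.inr (Sum.inl _) => false
  | Sum.inr (Sum.inl i), Sum.inr (Sum.inr j) => decide (i.val = j.val ∨ i.val = j.val + 1)
  | Sum.inr (Sum.inr j), Sum.inl i => decide (i.val = j.val + 2)
  | Sum.inr (Sum.inr _), Sum.inr (Sum.inl _) => false
  | Sum.inr (Sum.inr _), Sum.inr (Sum.inr _) => false

/-- The graph `Gₘ` from the paper (with `3m - 1` vertices). -/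
def Gm (m : ℕ) : SimpleGraph (GV m) where
  Adj u v := adjHalf m u v = true ∨ adjHalf m v u = true
  symm := ⟨fun _ _ h => h.symm⟩
  loopless := ⟨by
    rintro (i | i | j) h <;> simp [adjHalf] at h⟩

instance (m : ℕ) : DecidableRel (Gm m).Adj := fun u v =>
  inferInstanceAs (Decidable (adjHalf m u v = true ∨ adjHalf m v u = true))

/-- A walk `w` (a closed walk from `v` to `v`) is an induced cycle if it is a cycle and
every edge of the graph between vertices of the cycle is an edge of the cycle. -/
def IsInducedCycle {V : Type*} (G : SimpleGraph V) {v : V} (w : G.Walk v v) : Prop :=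
  w.IsCycle ∧ ∀ x ∈ w.support, ∀ y ∈ w.support, G.Adj x y → s(x, y) ∈ w.edges

/-- A graph is ternary if it has no induced cycle of length divisible by `3`. -/
def Ternary {V : Type*} (G : SimpleGraph V) : Prop :=
  ∀ (v : V) (w : G.Walk v v), IsInducedCycle G w → ¬ (3 ∣ w.length)



section WalkLemmas

variable {V : Type*} {G : SimpleGraph V}

lemma getVert_mem_support {u v : V} (w : G.Walk u v) (i : ℕ) : w.getVert i ∈ w.support := by
  induction w generalizing i with
  | nil => cases i <;> simp [SimpleGraph.Walk.getVert]
  | cons h p ih =>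
    cases i with
    | zero => simp [SimpleGraph.Walk.getVert]
    | succ n => simp only [SimpleGraph.Walk.getVert_cons_succ, SimpleGraph.Walk.support_cons,
        List.mem_cons]; exact Or.inr (ih n)

lemma getVert_eq_getElem {u v : V} (w : G.Walk u v) (i : ℕ) (h : i < w.support.length) :
    w.getVert i = w.support[i] := by
  induction w generalizing i with
  | nil =>
    simp only [SimpleGraph.Walk.support_nil, List.length_cons, List.length_nil] at h
    interval_cases i <;> simp [SimpleGraph.Walk.getVert]
  | cons hadj p ih =>
    cases i with
    | zero => simp [SimpleGraph.Walk.getVert]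
    | succ n =>
      simp only [SimpleGraph.Walk.support_cons, List.length_cons] at h
      simp only [SimpleGraph.Walk.getVert_cons_succ, SimpleGraph.Walk.support_cons,
        List.getElem_cons_succ]
      exact ih n (by omega)

lemma mem_edges_getVert {u v : V} (w : G.Walk u v) (x y : V) (h : s(x, y) ∈ w.edges) :
    ∃ t, t < w.length ∧ ((w.getVert t = x ∧ w.getVert (t+1) = y) ∨
      (w.getVert t = y ∧ w.getVert (t+1) = x)) := by
  induction w with
  | nil => simp at h
  | cons hadj p ih =>
    rename_i a b c
    simp only [SimpleGraph.Walk.edges_cons, List.mem_cons] at h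
    rcases h with h | h
    · refine ⟨0, by simp, ?_⟩
      rw [Sym2.eq_iff] at h
      rcases h with ⟨h1, h2⟩ | ⟨h1, h2⟩
      · left; constructor
        · simp [SimpleGraph.Walk.getVert, h1]
        · rw [SimpleGraph.Walk.getVert_cons_succ, SimpleGraph.Walk.getVert_zero, h2]
      · right; constructor
        · simp [SimpleGraph.Walk.getVert, h2]
        · rw [SimpleGraph.Walk.getVert_cons_succ, SimpleGraph.Walk.getVert_zero, h1]
    · obtain ⟨t, ht, hc⟩ := ih h
      exact ⟨t + 1, by simpa using Nat.succ_lt_succ ht,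
        by simpa only [SimpleGraph.Walk.getVert_cons_succ] using hc⟩

/-- Injectivity of `getVert` on `[0, length)` for a cycle. -/
lemma cycle_getVert_inj {v : V} {w : G.Walk v v} (hc : w.IsCycle)
    {i j : ℕ} (hi : i < w.length) (hj : j < w.length) (h : w.getVert i = w.getVert j) :
    i = j := by
  have hnd : w.support.tail.Nodup := hc.support_nodup
  have hsl : w.support.length = w.length + 1 := w.length_support
  have htl : w.support.tail.length = w.length := by
    rw [List.length_tail, hsl]; omega
  have h3 : 3 ≤ w.length := hc.three_le_length
  have key : ∀ (k : ℕ) (_ : k ≤ w.length) (_ : k ≠ 0),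
      w.getVert k = w.support.tail[k - 1]'(by omega) := by
    intro k hk hk0
    obtain ⟨k', rfl⟩ : ∃ k', k = k' + 1 := ⟨k - 1, by omega⟩
    have h1 : w.getVert (k'+1) = w.support[k'+1]'(by omega) :=
      getVert_eq_getElem w (k'+1) (by omega)
    have h2 : w.support.tail[k']'(by omega) = w.support[k'+1]'(by omega) :=
      List.getElem_tail _
    simp only [Nat.add_sub_cancel]
    rw [h1, h2]
  have hlast : w.support.tail[w.length - 1]'(by omega) = v := by
    have := key w.length le_rfl (by omega)
    rw [SimpleGraph.Walk.getVert_length] at this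
    exact this.symm
  rcases Nat.eq_zero_or_pos i with hi0 | hip
  · rcases Nat.eq_zero_or_pos j with hj0 | hjp
    · omega
    · exfalso
      subst hi0
      rw [SimpleGraph.Walk.getVert_zero] at h
      rw [key j (by omega) (by omega)] at h
      have := (List.Nodup.getElem_inj_iff hnd).mp (hlast.trans h)
      omega
  · rcases Nat.eq_zero_or_pos j with hj0 | hjp
    · exfalso
      subst hj0
      rw [SimpleGraph.Walk.getVert_zero] at h
      rw [key i (by omega) (by omega)] at h
      have := (List.Nodup.getElem_inj_iff hnd).mp (h.trans hlast.symm)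
      omega
    · rw [key i (by omega) (by omega), key j (by omega) (by omega)] at h
      have := (List.Nodup.getElem_inj_iff hnd).mp h
      omega

end WalkLemmas


section ModInt
variable {L : ℕ}

/-- `n` reduced mod `L`, as a natural number. -/
def imod (L : ℕ) (n : ℤ) : ℕ := (n % (L:ℤ)).toNat

lemma imod_lt (hL : 0 < L) (n : ℤ) : imod L n < L := by
  have h1 : 0 ≤ n % (L:ℤ) := Int.emod_nonneg n (by exact_mod_cast hL.ne')
  have h2 : n % (L:ℤ) < L := Int.emod_lt_of_pos n (by exact_mod_cast hL)
  unfold imod; omega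

lemma imod_succ (hL : 2 ≤ L) (n : ℤ) :
    imod L (n+1) = imod L n + 1 ∨ (imod L n = L - 1 ∧ imod L (n+1) = 0) := by
  have hL0 : (0:ℤ) < (L:ℤ) := by exact_mod_cast (by omega : 0 < L)
  have h1 : 0 ≤ n % (L:ℤ) := Int.emod_nonneg n (by omega)
  have h2 : n % (L:ℤ) < L := Int.emod_lt_of_pos n hL0
  have ed := Int.mul_ediv_add_emod n (L:ℤ)
  have e : (n+1) % (L:ℤ) = (n % (L:ℤ) + 1) % (L:ℤ) := by
    conv_lhs => rw [← ed]
    rw [show (L:ℤ) * (n/(L:ℤ)) + n % (L:ℤ) + 1 = (n % (L:ℤ) + 1) + (n/(L:ℤ)) * (L:ℤ) by ring,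
      Int.add_mul_emod_self_right]
  rcases lt_or_ge (n % (L:ℤ) + 1) (L:ℤ) with h | h
  · left
    have e2 : (n+1) % (L:ℤ) = n % (L:ℤ) + 1 := by
      rw [e, Int.emod_eq_of_lt (by omega) h]
    unfold imod; omega
  · right
    have hsum : n % (L:ℤ) + 1 = (L:ℤ) := by omega
    have e2 : (n+1) % (L:ℤ) = 0 := by rw [e, hsum, Int.emod_self]
    unfold imod; omega

lemma imod_add (hL : 2 ≤ L) (d : ℕ) (n : ℤ) :
    imod L (n + (d:ℤ)) = (imod L n + d) % L := by
  induction d with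
  | zero => simpa using (Nat.mod_eq_of_lt (imod_lt (by omega) n)).symm
  | succ d ih =>
    have ecast : n + ((d:ℕ)+1 : ℤ) = (n + (d:ℤ)) + 1 := by push_cast; ring
    rw [show ((d+1 : ℕ) : ℤ) = ((d:ℕ):ℤ) + 1 by push_cast; ring, ← add_assoc]
    rcases imod_succ hL (n + (d:ℤ)) with h | ⟨h1, h2⟩
    · rw [h, ih]
      have hlt : (imod L n + d) % L + 1 < L := by
        have := imod_lt (show 0 < L by omega) (n + (d:ℤ) + 1)
        rw [h, ih] at this
        omega
      rw [← add_assoc]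
      rw [show (imod L n + d + 1) % L = ((imod L n + d) % L + 1) % L from
        (Nat.mod_add_mod _ _ _).symm ▸ rfl]
      · exact (Nat.mod_eq_of_lt hlt).symm
    · rw [h2, ih] at *
      rw [← add_assoc]
      have : (imod L n + d + 1) % L = ((imod L n + d) % L + 1) % L :=
        (Nat.mod_add_mod _ _ _).symm ▸ rfl
      rw [this, h1, show L - 1 + 1 = L by omega, Nat.mod_self]

end ModInt

-- ### adjacency characterizations
section Adj
variable {m : ℕ}

lemma Gm_adj {u v : GV m} : (Gm m).Adj u v ↔ (adjHalf m u v = true ∨ adjHalf m v u = true) :=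
  Iff.rfl

lemma adj_aa {i j : Fin m} :
    (Gm m).Adj (Sum.inl i) (Sum.inl j) ↔ (i.val + 1 = j.val ∨ j.val + 1 = i.val) := by
  simp [Gm_adj, adjHalf]

lemma adj_ab {i j : Fin m} :
    (Gm m).Adj (Sum.inl i) (Sum.inr (Sum.inl j)) ↔ i = j := by
  simp [Gm_adj, adjHalf, eq_comm]

lemma adj_ba {i j : Fin m} :
    (Gm m).Adj (Sum.inr (Sum.inl j)) (Sum.inl i) ↔ i = j := by
  simp [Gm_adj, adjHalf, eq_comm]

lemma adj_ac {i : Fin m} {j : Fin (m-1)} :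
    (Gm m).Adj (Sum.inl i) (Sum.inr (Sum.inr j)) ↔ i.val = j.val + 2 := by
  simp [Gm_adj, adjHalf]

lemma adj_ca {i : Fin m} {j : Fin (m-1)} :
    (Gm m).Adj (Sum.inr (Sum.inr j)) (Sum.inl i) ↔ i.val = j.val + 2 := by
  simp [Gm_adj, adjHalf]

lemma adj_bc {i : Fin m} {j : Fin (m-1)} :
    (Gm m).Adj (Sum.inr (Sum.inl i)) (Sum.inr (Sum.inr j)) ↔
      (i.val = j.val ∨ i.val = j.val + 1) := by
  simp [Gm_adj, adjHalf]

lemma adj_cb {i : Fin m} {j : Fin (m-1)} :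
    (Gm m).Adj (Sum.inr (Sum.inr j)) (Sum.inr (Sum.inl i)) ↔
      (i.val = j.val ∨ i.val = j.val + 1) := by
  simp [Gm_adj, adjHalf]

lemma adj_bb {i j : Fin m} : ¬ (Gm m).Adj (Sum.inr (Sum.inl i)) (Sum.inr (Sum.inl j)) := by
  simp [Gm_adj, adjHalf]

lemma adj_cc {i j : Fin (m-1)} : ¬ (Gm m).Adj (Sum.inr (Sum.inr i)) (Sum.inr (Sum.inr j)) := by
  simp [Gm_adj, adjHalf]

/-- The level of a vertex. -/
def lvl {m : ℕ} : GV m → ℕ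
  | Sum.inl i => i.val
  | Sum.inr (Sum.inl i) => i.val
  | Sum.inr (Sum.inr j) => j.val + 1

lemma Gm_triangle_free (x y z : GV m) (h1 : (Gm m).Adj x y) (h2 : (Gm m).Adj y z)
    (h3 : (Gm m).Adj x z) : False := by
  rcases x with i|i|i <;> rcases y with j|j|j <;> rcases z with k|k|k <;>
    first
    | exact adj_bb h1 | exact adj_bb h2 | exact adj_bb h3
    | exact adj_cc h1 | exact adj_cc h2 | exact adj_cc h3
    | (simp only [Gm_adj, adjHalf, Bool.false_eq_true, or_false, false_or, or_self,
        decide_eq_true_eq, Fin.ext_iff] at h1 h2 h3 <;> omega)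
    | (simp only [Gm_adj, adjHalf, Bool.false_eq_true, or_false, false_or, or_self,
        decide_eq_true_eq, Fin.ext_iff] at h1 h2 h3)

-- ### neighbor classification
lemma nbr_of_a {i : Fin m} {x : GV m} (h : (Gm m).Adj (Sum.inl i) x) :
    (∃ t : Fin m, x = Sum.inl t ∧ (i.val + 1 = t.val ∨ t.val + 1 = i.val)) ∨
    (x = Sum.inr (Sum.inl i)) ∨
    (∃ k : Fin (m-1), x = Sum.inr (Sum.inr k) ∧ i.val = k.val + 2) := by
  rcases x with t|t|t
  · exact Or.inl ⟨t, rfl, adj_aa.mp h⟩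
  · exact Or.inr (Or.inl (by rw [adj_ab.mp h]))
  · exact Or.inr (Or.inr ⟨t, rfl, adj_ac.mp h⟩)

lemma nbr_of_b {i : Fin m} {x : GV m} (h : (Gm m).Adj (Sum.inr (Sum.inl i)) x) :
    (x = Sum.inl i) ∨
    (∃ k : Fin (m-1), x = Sum.inr (Sum.inr k) ∧ (i.val = k.val ∨ i.val = k.val + 1)) := by
  rcases x with t|t|t
  · exact Or.inl (by rw [adj_ba.mp h])
  · exact absurd h adj_bb
  · exact Or.inr ⟨t, rfl, adj_bc.mp h⟩

lemma nbr_of_c {k : Fin (m-1)} {x : GV m} (h : (Gm m).Adj (Sum.inr (Sum.inr k)) x) :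
    (∃ t : Fin m, x = Sum.inl t ∧ t.val = k.val + 2) ∨
    (∃ t : Fin m, x = Sum.inr (Sum.inl t) ∧ (t.val = k.val ∨ t.val = k.val + 1)) := by
  rcases x with t|t|t
  · exact Or.inl ⟨t, rfl, adj_ca.mp h⟩
  · exact Or.inr ⟨t, rfl, adj_cb.mp h⟩
  · exact absurd h adj_cc

section Core

variable {g : ℤ → GV m}

-- reversal lemmas
lemma rev_adj (hadj : ∀ n : ℤ, (Gm m).Adj (g n) (g (n+1))) (c : ℤ) :
    ∀ n : ℤ, (Gm m).Adj (g (c - n)) (g (c - (n+1))) := by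
  intro n
  have h := hadj (c - (n+1))
  rw [show c - (n+1) + 1 = c - n by ring] at h
  exact h.symm

lemma rev_ne2 (hne2 : ∀ n : ℤ, g n ≠ g (n+2)) (c : ℤ) :
    ∀ n : ℤ, g (c - n) ≠ g (c - (n+2)) := by
  intro n h
  apply hne2 (c - (n+2))
  rw [show c - (n+2) + 2 = c - n by ring]
  exact h.symm

lemma rev_ind3 (hind3 : ∀ n : ℤ, ¬ (Gm m).Adj (g n) (g (n+3))) (c : ℤ) :
    ∀ n : ℤ, ¬ (Gm m).Adj (g (c - n)) (g (c - (n+3))) := by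
  intro n h
  apply hind3 (c - (n+3))
  rw [show c - (n+3) + 3 = c - n by ring]
  exact h.symm

lemma rev_ind4 (hind4 : ∀ n : ℤ, ¬ (Gm m).Adj (g n) (g (n+4))) (c : ℤ) :
    ∀ n : ℤ, ¬ (Gm m).Adj (g (c - n)) (g (c - (n+4))) := by
  intro n h
  apply hind4 (c - (n+4))
  rw [show c - (n+4) + 4 = c - n by ring]
  exact h.symm

/-- Case A of the `b`-at-max-level argument: the `a`-neighbor is on the `+` side. -/
lemma bmax_caseA
    (hadj : ∀ n : ℤ, (Gm m).Adj (g n) (g (n+1)))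
    (hne2 : ∀ n : ℤ, g n ≠ g (n+2))
    (hind4 : ∀ n : ℤ, ¬ (Gm m).Adj (g n) (g (n+4)))
    (K : ℕ) (hK : ∀ n : ℤ, lvl (g n) ≤ K)
    (p : ℤ) (i : Fin m) (hgp : g p = Sum.inr (Sum.inl i)) (hiK : i.val = K)
    (k : Fin (m-1)) (hx1 : g (p+1) = Sum.inl i)
    (hxm1 : g (p-1) = Sum.inr (Sum.inr k)) (hk : k.val + 1 = i.val) : False := by
  -- xm2 = g (p-2)
  have h2 := hadj (p-2)
  rw [show p-2+1 = p-1 by ring, hxm1] at h2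
  rcases nbr_of_c h2.symm with ⟨t, hxm2, ht⟩ | ⟨t, hxm2, ht⟩
  · -- a-neighbor of c k at level k+2 = K+1 : too high
    have := hK (p-2); rw [hxm2] at this; simp only [lvl] at this; omega
  have ht' : t.val = k.val := by
    rcases ht with h | h
    · exact h
    · exfalso
      apply hne2 (p-2)
      rw [show p-2+2 = p by ring, hxm2, hgp]
      have : t = i := Fin.ext (by omega)
      rw [this]
  -- x2 = g (p+2)
  have h3 := hadj (p+1)
  rw [show p+1+1 = p+2 by ring, hx1] at h3
  rcases nbr_of_a h3 with ⟨s, hx2, hs⟩ | hx2 | ⟨s, hx2, hs⟩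
  · rcases hs with hs | hs
    · -- a (i+1) : too high
      have := hK (p+2); rw [hx2] at this; simp only [lvl] at this; omega
    · -- a s with s+1 = i : adjacent to b t since s = t
      apply hind4 (p-2)
      rw [show p-2+4 = p+2 by ring, hxm2, hx2]
      exact adj_ba.mpr (Fin.ext (by omega))
  · -- b i = g p
    apply hne2 p
    rw [hgp, hx2]
  · -- c s with i = s+2 : adjacent to b t since t = s+1
    apply hind4 (p-2)
    rw [show p-2+4 = p+2 by ring, hxm2, hx2]
    exact adj_bc.mpr (Or.inr (by omega))

/-- A `b`-vertex cannot attain the maximal level of an (enough-)induced closed sequence. -/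
lemma bmax
    (hadj : ∀ n : ℤ, (Gm m).Adj (g n) (g (n+1)))
    (hne2 : ∀ n : ℤ, g n ≠ g (n+2))
    (hind4 : ∀ n : ℤ, ¬ (Gm m).Adj (g n) (g (n+4)))
    (K : ℕ) (hK : ∀ n : ℤ, lvl (g n) ≤ K)
    (p : ℤ) (i : Fin m) (hgp : g p = Sum.inr (Sum.inl i)) (hiK : i.val = K) : False := by
  have h1 := hadj p
  rw [hgp] at h1
  have h0 := hadj (p-1)
  rw [show p-1+1 = p by ring, hgp] at h0
  rcases nbr_of_b h1 with hx1 | ⟨k, hx1, hk⟩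
  · rcases nbr_of_b h0.symm with hxm1 | ⟨k, hxm1, hk⟩
    · -- both a i : equal, contradiction with hne2
      apply hne2 (p-1)
      rw [show p-1+2 = p+1 by ring, hxm1, hx1]
    · -- x1 = a i, xm1 = c k
      rcases hk with hk | hk
      · -- k = i : level k+1 too high
        have := hK (p-1); rw [hxm1] at this; simp only [lvl] at this; omega
      · exact bmax_caseA hadj hne2 hind4 K hK p i hgp hiK k hx1 hxm1 (by omega)
  · rcases hk with hk | hk
    · -- k = i : level of g (p+1) too high
      have := hK (p+1); rw [hx1] at this; simp only [lvl] at this; omega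
    rcases nbr_of_b h0.symm with hxm1 | ⟨k', hxm1, hk'⟩
    · -- mirror : x1 = c k, xm1 = a i ; apply case A to the reversed sequence
      have hadj' := rev_adj hadj (2*p)
      have hne2' := rev_ne2 hne2 (2*p)
      have hind4' := rev_ind4 hind4 (2*p)
      refine bmax_caseA (g := fun n => g (2*p - n)) hadj' hne2' hind4' K
        (fun n => hK (2*p - n)) p i ?_ hiK k ?_ ?_ (by omega)
      · show g (2*p - p) = _
        rw [show 2*p - p = p by ring, hgp]
      · show g (2*p - (p+1)) = _
        rw [show 2*p - (p+1) = p - 1 by ring, hxm1]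
      · show g (2*p - (p-1)) = _
        rw [show 2*p - (p-1) = p + 1 by ring, hx1]
    · rcases hk' with hk' | hk'
      · have := hK (p-1); rw [hxm1] at this; simp only [lvl] at this; omega
      · -- both c with k.val = k'.val = i-1
        apply hne2 (p-1)
        rw [show p-1+2 = p+1 by ring, hxm1, hx1]
        have : k' = k := Fin.ext (by omega)
        rw [this]

/-- A `c`-vertex cannot attain the maximal level either. -/
lemma cmax
    (hadj : ∀ n : ℤ, (Gm m).Adj (g n) (g (n+1)))
    (hne2 : ∀ n : ℤ, g n ≠ g (n+2))
    (hind4 : ∀ n : ℤ, ¬ (Gm m).Adj (g n) (g (n+4)))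
    (K : ℕ) (hK : ∀ n : ℤ, lvl (g n) ≤ K)
    (p : ℤ) (k : Fin (m-1)) (hgp : g p = Sum.inr (Sum.inr k)) (hkK : k.val + 1 = K) :
    False := by
  have h1 := hadj p
  rw [hgp] at h1
  have h0 := hadj (p-1)
  rw [show p-1+1 = p by ring, hgp] at h0
  rcases nbr_of_c h1 with ⟨t, hx1, ht⟩ | ⟨t, hx1, ht⟩
  · have := hK (p+1); rw [hx1] at this; simp only [lvl] at this; omega
  rcases ht with ht | ht
  · -- x1 = b k (low) ; look at xm1
    rcases nbr_of_c h0.symm with ⟨t', hxm1, ht'⟩ | ⟨t', hxm1, ht'⟩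
    · have := hK (p-1); rw [hxm1] at this; simp only [lvl] at this; omega
    rcases ht' with ht' | ht'
    · -- both b at k.val : equal
      apply hne2 (p-1)
      rw [show p-1+2 = p+1 by ring, hxm1, hx1]
      have : t' = t := Fin.ext (by omega)
      rw [this]
    · -- xm1 = b (k+1) at max level
      exact bmax hadj hne2 hind4 K hK (p-1) t' hxm1 (by omega)
  · -- x1 = b (k+1) at max level
    exact bmax hadj hne2 hind4 K hK (p+1) t hx1 (by omega)

/-- Case B: `a` at max level, with the `c`-neighbor on the `+` side. -/
lemma amax_caseB
    (hadj : ∀ n : ℤ, (Gm m).Adj (g n) (g (n+1)))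
    (hne2 : ∀ n : ℤ, g n ≠ g (n+2))
    (hind3 : ∀ n : ℤ, ¬ (Gm m).Adj (g n) (g (n+3)))
    (hind4 : ∀ n : ℤ, ¬ (Gm m).Adj (g n) (g (n+4)))
    (K : ℕ) (hK : ∀ n : ℤ, lvl (g n) ≤ K)
    (p : ℤ) (i : Fin m) (hgp : g p = Sum.inl i) (hiK : i.val = K)
    (k : Fin (m-1)) (hx1 : g (p+1) = Sum.inr (Sum.inr k)) (hk : i.val = k.val + 2)
    (s : Fin m) (hxm1 : g (p-1) = Sum.inl s) (hs : s.val + 1 = i.val) : False := by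
  -- x2 = g (p+2)
  have h2 := hadj (p+1)
  rw [show p+1+1 = p+2 by ring, hx1] at h2
  rcases nbr_of_c h2 with ⟨t, hx2, ht⟩ | ⟨t, hx2, ht⟩
  · -- x2 = a (k+2) = a i = g p
    apply hne2 p
    rw [hgp, hx2]
    have : t = i := Fin.ext (by omega)
    rw [this]
  rcases ht with ht | ht
  · -- x2 = b t with t = k ; continue to x3
    have h3 := hadj (p+2)
    rw [show p+2+1 = p+3 by ring, hx2] at h3
    rcases nbr_of_b h3 with hx3 | ⟨kk, hx3, hkk⟩
    · -- x3 = a t : adjacent to xm1 = a s since t+1 = s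
      apply hind4 (p-1)
      rw [show p-1+4 = p+3 by ring, hxm1, hx3]
      exact adj_aa.mpr (Or.inr (by omega))
    · rcases hkk with hkk | hkk
      · -- x3 = c kk with kk = t = k : equals g (p+1)
        apply hne2 (p+1)
        rw [show p+1+2 = p+3 by ring, hx1, hx3]
        have : kk = k := Fin.ext (by omega)
        rw [this]
      · -- x3 = c kk with t = kk+1 : adjacent to a s since s = kk+2
        apply hind4 (p-1)
        rw [show p-1+4 = p+3 by ring, hxm1, hx3]
        exact adj_ac.mpr (by omega)
  · -- x2 = b t with t = k+1 : adjacent to a s since t = s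
    apply hind3 (p-1)
    rw [show p-1+3 = p+2 by ring, hxm1, hx2]
    exact adj_ab.mpr (Fin.ext (by omega))

/-- The full contradiction: some vertex has maximal level, and every case is impossible. -/
lemma core
    (hadj : ∀ n : ℤ, (Gm m).Adj (g n) (g (n+1)))
    (hne2 : ∀ n : ℤ, g n ≠ g (n+2))
    (hind3 : ∀ n : ℤ, ¬ (Gm m).Adj (g n) (g (n+3)))
    (hind4 : ∀ n : ℤ, ¬ (Gm m).Adj (g n) (g (n+4)))
    (K : ℕ) (hK : ∀ n : ℤ, lvl (g n) ≤ K)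
    (p : ℤ) (hp : lvl (g p) = K) : False := by
  rcases hgp : g p with i | i | i
  · -- a-vertex at max level
    have hiK : i.val = K := by rw [hgp] at hp; simpa [lvl] using hp
    have h1 := hadj p
    rw [hgp] at h1
    have h0 := hadj (p-1)
    rw [show p-1+1 = p by ring, hgp] at h0
    rcases nbr_of_a h1 with ⟨s, hx1, hs⟩ | hx1 | ⟨k, hx1, hk⟩
    · rcases hs with hs | hs
      · have := hK (p+1); rw [hx1] at this; simp only [lvl] at this; omega
      · -- x1 = a s with s+1 = i ; now xm1
        rcases nbr_of_a h0.symm with ⟨s', hxm1, hs'⟩ | hxm1 | ⟨k, hxm1, hk⟩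
        · rcases hs' with hs' | hs'
          · have := hK (p-1); rw [hxm1] at this; simp only [lvl] at this; omega
          · -- both a with val i-1 : equal
            apply hne2 (p-1)
            rw [show p-1+2 = p+1 by ring, hxm1, hx1]
            have : s' = s := Fin.ext (by omega)
            rw [this]
        · exact bmax hadj hne2 hind4 K hK (p-1) i hxm1 hiK
        · -- xm1 = c k : mirror of case B via reversal
          have hadj' := rev_adj hadj (2*p)
          have hne2' := rev_ne2 hne2 (2*p)
          have hind3' := rev_ind3 hind3 (2*p)
          have hind4' := rev_ind4 hind4 (2*p)
          refine amax_caseB (g := fun n => g (2*p - n)) hadj' hne2' hind3' hind4' K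
            (fun n => hK (2*p - n)) p i ?_ hiK k ?_ (by omega) s ?_ (by omega)
          · show g (2*p - p) = _
            rw [show 2*p - p = p by ring, hgp]
          · show g (2*p - (p+1)) = _
            rw [show 2*p - (p+1) = p - 1 by ring, hxm1]
          · show g (2*p - (p-1)) = _
            rw [show 2*p - (p-1) = p + 1 by ring, hx1]
    · exact bmax hadj hne2 hind4 K hK (p+1) i hx1 hiK
    · -- x1 = c k with i = k+2 ; now xm1
      rcases nbr_of_a h0.symm with ⟨s, hxm1, hs⟩ | hxm1 | ⟨k', hxm1, hk'⟩
      · rcases hs with hs | hs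
        · have := hK (p-1); rw [hxm1] at this; simp only [lvl] at this; omega
        · exact amax_caseB hadj hne2 hind3 hind4 K hK p i hgp hiK k hx1 hk s hxm1 hs
      · exact bmax hadj hne2 hind4 K hK (p-1) i hxm1 hiK
      · -- both c with val i-2 : equal
        apply hne2 (p-1)
        rw [show p-1+2 = p+1 by ring, hxm1, hx1]
        have : k' = k := Fin.ext (by omega)
        rw [this]
  · exact bmax hadj hne2 hind4 K hK p i hgp (by rw [hgp] at hp; simpa [lvl] using hp)
  · exact cmax hadj hne2 hind4 K hK p i hgp (by rw [hgp] at hp; simpa [lvl] using hp)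

end Core


section Sep
variable {V : Type*} {G : SimpleGraph V} {v : V}

lemma cycle_sep {w : G.Walk v v} (hc : w.IsCycle)
    (hind : ∀ x ∈ w.support, ∀ y ∈ w.support, G.Adj x y → s(x, y) ∈ w.edges)
    (hL : 6 ≤ w.length) (i d : ℕ) (hi : i < w.length) (hd2 : 2 ≤ d) (hd4 : d ≤ 4) :
    w.getVert i ≠ w.getVert ((i+d) % w.length) ∧
      ¬ G.Adj (w.getVert i) (w.getVert ((i+d) % w.length)) := by
  set L := w.length with hLdef
  set j := (i + d) % L with hjdef
  have hj : j < L := Nat.mod_lt _ (by omega)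
  have hsplit : (i + d < L ∧ j = i + d) ∨ (L ≤ i + d ∧ j = i + d - L) := by
    rcases lt_or_ge (i + d) L with h | h
    · exact Or.inl ⟨h, by rw [hjdef, Nat.mod_eq_of_lt h]⟩
    · refine Or.inr ⟨h, ?_⟩
      rw [hjdef, Nat.mod_eq_sub_mod h, Nat.mod_eq_of_lt (by omega)]
  constructor
  · intro h
    have := cycle_getVert_inj hc hi hj h
    omega
  · intro hA
    have hedge := hind _ (getVert_mem_support w i) _ (getVert_mem_support w j) hA
    obtain ⟨t, htL, hcase⟩ := mem_edges_getVert w _ _ hedge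
    rcases hcase with ⟨h1, h2⟩ | ⟨h1, h2⟩
    · have hti : t = i := cycle_getVert_inj hc htL hi h1
      rcases Nat.lt_or_ge (t+1) L with ht1 | ht1
      · have := cycle_getVert_inj hc ht1 hj h2
        omega
      · have hv : w.getVert (t+1) = w.getVert 0 := by
          rw [show t + 1 = L by omega]
          rw [SimpleGraph.Walk.getVert_length, SimpleGraph.Walk.getVert_zero]
        have := cycle_getVert_inj hc (show 0 < L by omega) hj (hv.symm.trans h2)
        omega
    · have hti : t = j := cycle_getVert_inj hc htL hj h1
      rcases Nat.lt_or_ge (t+1) L with ht1 | ht1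
      · have := cycle_getVert_inj hc ht1 hi h2
        omega
      · have hv : w.getVert (t+1) = w.getVert 0 := by
          rw [show t + 1 = L by omega]
          rw [SimpleGraph.Walk.getVert_length, SimpleGraph.Walk.getVert_zero]
        have := cycle_getVert_inj hc (show 0 < L by omega) hi (hv.symm.trans h2)
        omega

end Sep

/-- For every `m ≥ 1` the graph `Gₘ` is ternary: it contains no induced cycle whose length
is divisible by `3`. -/

theorem Gm_ternary : ∀ m : ℕ, 1 ≤ m → Ternary (Gm m) := by
  intro m _ v w hIC hdvd
  obtain ⟨hc, hind⟩ := hIC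
  have h3 : 3 ≤ w.length := hc.three_le_length
  set L := w.length with hLdef
  by_cases hL3 : L = 3
  · -- triangle, impossible
    have a01 := w.adj_getVert_succ (show 0 < L by omega)
    have a12 := w.adj_getVert_succ (show 1 < L by omega)
    have a23 := w.adj_getVert_succ (show 2 < L by omega)
    have hv3 : w.getVert (2+1) = w.getVert 0 := by
      rw [show 2 + 1 = L by omega, SimpleGraph.Walk.getVert_length,
        SimpleGraph.Walk.getVert_zero]
    rw [hv3] at a23
    exact Gm_triangle_free _ _ _ a01 a12 a23.symm
  · obtain ⟨kk, hkk⟩ := hdvd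
    have hL6 : 6 ≤ L := by omega
    have hL0 : 0 < L := by omega
    set g : ℤ → GV m := fun n => w.getVert (imod L n) with hgdef
    -- adjacency along the cycle
    have hadjZ : ∀ n : ℤ, (Gm m).Adj (g n) (g (n+1)) := by
      intro n
      rcases imod_succ (L := L) (by omega) n with h | ⟨h1, h2⟩
      · have hlt : imod L n + 1 ≤ L := by
          have := imod_lt hL0 (n+1); omega
        show (Gm m).Adj (w.getVert (imod L n)) (w.getVert (imod L (n+1)))
        rw [h]
        exact w.adj_getVert_succ (by omega)
      · show (Gm m).Adj (w.getVert (imod L n)) (w.getVert (imod L (n+1)))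
        rw [h1, h2]
        have := w.adj_getVert_succ (show L - 1 < L by omega)
        rw [show L - 1 + 1 = L by omega, SimpleGraph.Walk.getVert_length] at this
        rw [SimpleGraph.Walk.getVert_zero]
        exact this
    -- separation of vertices at cyclic distance 2, 3, 4
    have hsep : ∀ (n : ℤ) (d : ℕ), 2 ≤ d → d ≤ 4 →
        g (n + (d:ℤ)) = w.getVert ((imod L n + d) % L) := by
      intro n d _ _
      show w.getVert (imod L (n + (d:ℤ))) = _
      rw [imod_add (by omega) d n]
    have hne2 : ∀ n : ℤ, g n ≠ g (n+2) := by
      intro n h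
      have e := hsep n 2 (by norm_num) (by norm_num)
      norm_num at e
      rw [e] at h
      exact (cycle_sep hc hind hL6 (imod L n) 2 (imod_lt hL0 n) (by norm_num)
        (by norm_num)).1 h
    have hind3 : ∀ n : ℤ, ¬ (Gm m).Adj (g n) (g (n+3)) := by
      intro n h
      have e := hsep n 3 (by norm_num) (by norm_num)
      norm_num at e
      rw [e] at h
      exact (cycle_sep hc hind hL6 (imod L n) 3 (imod_lt hL0 n) (by norm_num)
        (by norm_num)).2 h
    have hind4 : ∀ n : ℤ, ¬ (Gm m).Adj (g n) (g (n+4)) := by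
      intro n h
      have e := hsep n 4 (by norm_num) (by norm_num)
      norm_num at e
      rw [e] at h
      exact (cycle_sep hc hind hL6 (imod L n) 4 (imod_lt hL0 n) (by norm_num)
        (by norm_num)).2 h
    -- maximal level
    obtain ⟨b, hbmem, hbmax⟩ := Finset.exists_max_image (Finset.range L)
      (fun t => lvl (w.getVert t)) ⟨0, by simp [hL0]⟩
    have hKZ : ∀ n : ℤ, lvl (g n) ≤ lvl (w.getVert b) :=
      fun n => hbmax _ (Finset.mem_range.mpr (imod_lt hL0 n))
    have hb : b < L := Finset.mem_range.mp hbmem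
    have hgp : g (b : ℤ) = w.getVert b := by
      show w.getVert (imod L (b:ℤ)) = w.getVert b
      congr 1
      unfold imod
      rw [Int.emod_eq_of_lt (by positivity) (by exact_mod_cast hb)]
      exact Int.toNat_natCast b
    exact core hadjZ hne2 hind3 hind4 (lvl (w.getVert b)) hKZ (b : ℤ) (by rw [hgp])
end Adj
end

section
/- Let m ≥ 1 and let C and C' be two cycles of length 4 in the graph G_m. Then either C and C' have the same edge set, or their edge sets are disjoint. -/
set_option maxHeartbeats 2000000

def quadE {m : ℕ} (j : Fin (m-1)) (p q : Fin m) : List (Sym2 (GV m)) :=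
  [s(aV p, bV p), s(bV p, cV j), s(cV j, aV q), s(aV p, aV q)]

lemma classify {m : ℕ} {u v1 v2 v3 : GV m}
    (h1 : (Gm m).Adj u v1) (h2 : (Gm m).Adj v1 v2) (h3 : (Gm m).Adj v2 v3)
    (h4 : (Gm m).Adj v3 u)
    (d12 : v1 ≠ v2) (d13 : v1 ≠ v3) (d1u : v1 ≠ u) (d23 : v2 ≠ v3) (d2u : v2 ≠ u)
    (d3u : v3 ≠ u) :
    ∃ (j : Fin (m-1)) (p q : Fin m), p.val = j.val + 1 ∧ q.val = j.val + 2 ∧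
      ∀ e, (e ∈ [s(u,v1), s(v1,v2), s(v2,v3), s(v3,u)] ↔ e ∈ quadE j p q) := by
  rcases u with i0 | i0 | i0 <;> rcases v1 with i1 | i1 | i1 <;>
    rcases v2 with i2 | i2 | i2 <;> rcases v3 with i3 | i3 | i3 <;>
    simp only [Gm, adjHalf, SimpleGraph.Adj, decide_eq_true_eq, Bool.false_eq_true, or_false,
      false_or, or_self, ne_eq, Sum.inl.injEq, Sum.inr.injEq, Fin.ext_iff,
      not_false_iff, Sum.inl_ne_inr, Sum.inr_ne_inl, not_true_eq_false] at h1 h2 h3 h4 d12 d13 d1u d23 d2u d3u <;>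
    first
    | (exfalso; omega)
    | skip
  case inl.inl.inr.inl.inr.inr =>
    have hd : i2 = i1 := Fin.ext (by omega)
    subst hd
    refine ⟨i3, i2, i0, by omega, by omega, fun e => ?_⟩
    simp only [quadE, aV, bV, cV, List.mem_cons, List.not_mem_nil, or_false]
    constructor <;> rintro (rfl|rfl|rfl|rfl) <;> simp [Sym2.eq_iff]
  case inl.inl.inr.inr.inr.inl =>
    have hd : i0 = i3 := Fin.ext (by omega)
    subst hd
    refine ⟨i2, i0, i1, by omega, by omega, fun e => ?_⟩
    simp only [quadE, aV, bV, cV, List.mem_cons, List.not_mem_nil, or_false]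
    constructor <;> rintro (rfl|rfl|rfl|rfl) <;> simp [Sym2.eq_iff]
  case inl.inr.inl.inr.inr.inl =>
    have hd : i0 = i1 := Fin.ext (by omega)
    subst hd
    refine ⟨i2, i0, i3, by omega, by omega, fun e => ?_⟩
    simp only [quadE, aV, bV, cV, List.mem_cons, List.not_mem_nil, or_false]
    constructor <;> rintro (rfl|rfl|rfl|rfl) <;> simp [Sym2.eq_iff]
  case inl.inr.inr.inr.inl.inl =>
    have hd : i3 = i2 := Fin.ext (by omega)
    subst hd
    refine ⟨i1, i3, i0, by omega, by omega, fun e => ?_⟩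
    simp only [quadE, aV, bV, cV, List.mem_cons, List.not_mem_nil, or_false]
    constructor <;> rintro (rfl|rfl|rfl|rfl) <;> simp [Sym2.eq_iff]
  case inr.inl.inl.inl.inr.inr =>
    have hd : i0 = i1 := Fin.ext (by omega)
    subst hd
    refine ⟨i3, i0, i2, by omega, by omega, fun e => ?_⟩
    simp only [quadE, aV, bV, cV, List.mem_cons, List.not_mem_nil, or_false]
    constructor <;> rintro (rfl|rfl|rfl|rfl) <;> simp [Sym2.eq_iff]
  case inr.inl.inr.inr.inl.inl =>
    have hd : i0 = i3 := Fin.ext (by omega)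
    subst hd
    refine ⟨i1, i0, i2, by omega, by omega, fun e => ?_⟩
    simp only [quadE, aV, bV, cV, List.mem_cons, List.not_mem_nil, or_false]
    constructor <;> rintro (rfl|rfl|rfl|rfl) <;> simp [Sym2.eq_iff]
  case inr.inr.inl.inl.inr.inl =>
    have hd : i3 = i2 := Fin.ext (by omega)
    subst hd
    refine ⟨i0, i3, i1, by omega, by omega, fun e => ?_⟩
    simp only [quadE, aV, bV, cV, List.mem_cons, List.not_mem_nil, or_false]
    constructor <;> rintro (rfl|rfl|rfl|rfl) <;> simp [Sym2.eq_iff]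
  case inr.inr.inr.inl.inl.inl =>
    have hd : i2 = i1 := Fin.ext (by omega)
    subst hd
    refine ⟨i0, i2, i3, by omega, by omega, fun e => ?_⟩
    simp only [quadE, aV, bV, cV, List.mem_cons, List.not_mem_nil, or_false]
    constructor <;> rintro (rfl|rfl|rfl|rfl) <;> simp [Sym2.eq_iff]

/-- Any two `4`-cycles of `Gₘ` (for `m ≥ 1`) either have the same edge set or
have disjoint edge sets. -/
theorem Gm_four_cycles_eq_or_disjoint :
    ∀ m : ℕ, 1 ≤ m → ∀ (u u' : GV m) (w : (Gm m).Walk u u) (w' : (Gm m).Walk u' u'),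
      w.IsCycle → w'.IsCycle → w.length = 4 → w'.length = 4 →
      (∀ e, e ∈ w.edges ↔ e ∈ w'.edges) ∨ (∀ e, e ∈ w.edges → e ∉ w'.edges) := by
  intro m hm u u' w w' hc hc' hl hl'
  rcases w with _ | @⟨_, v1, _, h1, (_ | @⟨_, v2, _, h2, (_ | @⟨_, v3, _, h3,
    (_ | @⟨_, v4, _, h4, (_ | @⟨_, v5, _, h5, w⟩)⟩)⟩)⟩)⟩ <;>
    simp only [SimpleGraph.Walk.length_cons, SimpleGraph.Walk.length_nil] at hl <;>
    try omega
  rcases w' with _ | @⟨_, v1', _, h1', (_ | @⟨_, v2', _, h2', (_ | @⟨_, v3', _, h3',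
    (_ | @⟨_, v4', _, h4', (_ | @⟨_, v5', _, h5', w'⟩)⟩)⟩)⟩)⟩ <;>
    simp only [SimpleGraph.Walk.length_cons, SimpleGraph.Walk.length_nil] at hl' <;>
    try omega
  have hn := hc.support_nodup
  have hn' := hc'.support_nodup
  simp only [SimpleGraph.Walk.support_cons, SimpleGraph.Walk.support_nil, List.tail_cons,
    List.nodup_cons, List.mem_cons, List.mem_singleton, List.not_mem_nil, or_false,
    not_or, List.nodup_nil, and_true] at hn hn'
  obtain ⟨⟨d12, d13, d1u⟩, ⟨d23, d2u⟩, d3u, -⟩ := hn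
  obtain ⟨⟨d12', d13', d1u'⟩, ⟨d23', d2u'⟩, d3u', -⟩ := hn'
  obtain ⟨j, p, q, hp, hq, hiff⟩ := classify h1 h2 h3 h4 d12 d13 d1u d23 d2u d3u
  obtain ⟨j', p', q', hp', hq', hiff'⟩ := classify h1' h2' h3' h4' d12' d13' d1u' d23' d2u' d3u'
  simp only [SimpleGraph.Walk.edges_cons, SimpleGraph.Walk.edges_nil]
  by_cases hjj : j = j'
  · subst hjj
    have hpp : p = p' := Fin.ext (by omega)
    have hqq : q = q' := Fin.ext (by omega)
    subst hpp hqq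
    left
    intro e
    exact (hiff e).trans (hiff' e).symm
  · right
    intro e he he'
    have hj : ¬ (j : ℕ) = (j' : ℕ) := fun h => hjj (Fin.ext h)
    have m1 := (hiff e).mp he
    have m2 := (hiff' e).mp he'
    simp only [quadE, List.mem_cons, List.not_mem_nil, or_false] at m1 m2
    rcases m1 with rfl | rfl | rfl | rfl <;>
      simp only [Sym2.eq_iff, aV, bV, cV, Sum.inl.injEq, Sum.inr.injEq, Fin.ext_iff,
        and_false, false_and, or_self, reduceCtorEq, false_or, or_false] at m2 <;>
      omega
end

section
/- For every m ≥ 1, the graph G_m contains no cycle of length 6 (not merely no induced 6-cycle: it has no 6-cycle at all). -/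
open SimpleGraph

/-- The `i`-th entry of the support of a walk is its `i`-th vertex. -/
lemma Gm_support_getElem_eq_getVert {V : Type*} {G : SimpleGraph V} {u v : V}
    (p : G.Walk u v) (i : ℕ) (h : i < p.support.length) :
    p.support[i] = p.getVert i := by
  induction p generalizing i with
  | nil =>
    have : i = 0 := by simpa using h
    subst this; rfl
  | cons h q ih =>
    cases i with
    | zero => simp [Walk.getVert]
    | succ n =>
      simp only [Walk.support_cons] at h ⊢
      simp only [List.getElem_cons_succ, Walk.getVert_cons_succ]
      exact ih n (by simpa using h)

/-- On a cycle, `getVert` is injective on indices `< length`. -/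
lemma Gm_cycle_getVert_inj {V : Type*} {G : SimpleGraph V} {v : V}
    {p : G.Walk v v} (hp : p.IsCycle) {i j : ℕ}
    (hi : i < p.length) (hj : j < p.length) (h : p.getVert i = p.getVert j) : i = j := by
  have hnd : p.support.tail.Nodup := hp.2
  have hlen : p.support.length = p.length + 1 := p.length_support
  have htail : ∀ k, k < p.length → ∀ (hk : k < p.support.tail.length),
      p.support.tail[k] = p.getVert (k + 1) := by
    intro k hk hk'
    rw [List.getElem_tail, Gm_support_getElem_eq_getVert]
  have hlt : p.support.tail.length = p.length := by simp [hlen]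
  have key : ∀ a b, a < p.length → b < p.length →
      p.getVert (a + 1) = p.getVert (b + 1) → a = b := by
    intro a b ha hb hab
    have := hnd.getElem_inj_iff (i := a) (hi := by omega) (j := b) (hj := by omega)
    rw [htail a ha (by omega), htail b hb (by omega), hab] at this
    exact this.1 rfl
  have hpos : 1 ≤ p.length := by
    have := hp.three_le_length; omega
  rcases Nat.eq_zero_or_pos i with rfl | hi0 <;> rcases Nat.eq_zero_or_pos j with rfl | hj0
  · rfl
  · exfalso
    have h0 : p.getVert ((p.length - 1) + 1) = p.getVert ((j - 1) + 1) := by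
      have e1 : p.length - 1 + 1 = p.length := by omega
      have e2 : j - 1 + 1 = j := by omega
      rw [e1, e2, Walk.getVert_length, ← h, Walk.getVert_zero]
    have := key _ _ (by omega) (by omega) h0
    omega
  · exfalso
    have h0 : p.getVert ((p.length - 1) + 1) = p.getVert ((i - 1) + 1) := by
      have e1 : p.length - 1 + 1 = p.length := by omega
      have e2 : i - 1 + 1 = i := by omega
      rw [e1, e2, Walk.getVert_length, h, Walk.getVert_zero]
    have := key _ _ (by omega) (by omega) h0
    omega
  · have h0 : p.getVert ((i - 1) + 1) = p.getVert ((j - 1) + 1) := by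
      have e1 : i - 1 + 1 = i := by omega
      have e2 : j - 1 + 1 = j := by omega
      rw [e1, e2, h]
    have := key _ _ (by omega) (by omega) h0
    omega

set_option maxHeartbeats 4000000 in
/-- Six pairwise distinct vertices of `Gₘ` cannot be cyclically consecutively adjacent. -/
lemma Gm_no_six (m : ℕ) (x0 x1 x2 x3 x4 x5 : GV m)
    (h01 : (Gm m).Adj x0 x1) (h12 : (Gm m).Adj x1 x2) (h23 : (Gm m).Adj x2 x3)
    (h34 : (Gm m).Adj x3 x4) (h45 : (Gm m).Adj x4 x5) (h50 : (Gm m).Adj x5 x0)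
    (n01 : x0 ≠ x1) (n02 : x0 ≠ x2) (n03 : x0 ≠ x3) (n04 : x0 ≠ x4) (n05 : x0 ≠ x5)
    (n12 : x1 ≠ x2) (n13 : x1 ≠ x3) (n14 : x1 ≠ x4) (n15 : x1 ≠ x5) (n23 : x2 ≠ x3)
    (n24 : x2 ≠ x4) (n25 : x2 ≠ x5) (n34 : x3 ≠ x4) (n35 : x3 ≠ x5) (n45 : x4 ≠ x5) : False := by
  rcases x0 with i0|i0|i0 <;> rcases x1 with i1|i1|i1 <;>
    simp only [Gm, adjHalf, decide_eq_true_eq, Bool.false_eq_true, false_or, or_false,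
      Fin.ext_iff] at h01 <;>
  rcases x2 with i2|i2|i2 <;>
    simp only [Gm, adjHalf, decide_eq_true_eq, Bool.false_eq_true, false_or, or_false,
      Fin.ext_iff] at h12 <;>
  rcases x3 with i3|i3|i3 <;>
    simp only [Gm, adjHalf, decide_eq_true_eq, Bool.false_eq_true, false_or, or_false,
      Fin.ext_iff] at h23 <;>
  rcases x4 with i4|i4|i4 <;>
    simp only [Gm, adjHalf, decide_eq_true_eq, Bool.false_eq_true, false_or, or_false,
      Fin.ext_iff] at h34 <;>
  rcases x5 with i5|i5|i5 <;>
    simp only [Gm, adjHalf, decide_eq_true_eq, Bool.false_eq_true, false_or, or_false,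
      Fin.ext_iff] at h45 h50 <;>
  simp only [ne_eq, Sum.inl.injEq, Sum.inr.injEq, Fin.ext_iff, not_false_eq_true,
    reduceCtorEq, not_true_eq_false] at n01 n02 n03 n04 n05 n12 n13 n14 n15 n23 n24 n25 n34 n35 n45 <;>
  omega

/-- For every `m ≥ 1`, the graph `Gₘ` contains no cycle of length `6` at all. -/
theorem Gm_no_six_cycle :
    ∀ m : ℕ, 1 ≤ m → ∀ (v : GV m) (w : (Gm m).Walk v v), w.IsCycle → w.length ≠ 6 := by
  intro m hm v w hcyc hlen
  have hadj : ∀ i, i < 6 → (Gm m).Adj (w.getVert i) (w.getVert (i + 1)) := by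
    intro i hi
    exact w.adj_getVert_succ (by omega)
  have h6 : w.getVert 6 = w.getVert 0 := by
    rw [← hlen, Walk.getVert_length, Walk.getVert_zero]
  have hne : ∀ i j, i < 6 → j < 6 → i ≠ j → w.getVert i ≠ w.getVert j := by
    intro i j hi hj hij h
    exact hij (Gm_cycle_getVert_inj hcyc (by omega) (by omega) h)
  have h50 := hadj 5 (by norm_num)
  rw [show (5:ℕ)+1 = 6 from rfl, h6] at h50
  exact Gm_no_six m (w.getVert 0) (w.getVert 1) (w.getVert 2) (w.getVert 3) (w.getVert 4)
    (w.getVert 5)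
    (hadj 0 (by norm_num)) (hadj 1 (by norm_num)) (hadj 2 (by norm_num))
    (hadj 3 (by norm_num)) (hadj 4 (by norm_num)) h50
    (hne 0 1 (by norm_num) (by norm_num) (by norm_num))
    (hne 0 2 (by norm_num) (by norm_num) (by norm_num))
    (hne 0 3 (by norm_num) (by norm_num) (by norm_num))
    (hne 0 4 (by norm_num) (by norm_num) (by norm_num))
    (hne 0 5 (by norm_num) (by norm_num) (by norm_num))
    (hne 1 2 (by norm_num) (by norm_num) (by norm_num))
    (hne 1 3 (by norm_num) (by norm_num) (by norm_num))
    (hne 1 4 (by norm_num) (by norm_num) (by norm_num))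
    (hne 1 5 (by norm_num) (by norm_num) (by norm_num))
    (hne 2 3 (by norm_num) (by norm_num) (by norm_num))
    (hne 2 4 (by norm_num) (by norm_num) (by norm_num))
    (hne 2 5 (by norm_num) (by norm_num) (by norm_num))
    (hne 3 4 (by norm_num) (by norm_num) (by norm_num))
    (hne 3 5 (by norm_num) (by norm_num) (by norm_num))
    (hne 4 5 (by norm_num) (by norm_num) (by norm_num))
end

section
/- Let G be a finite simple graph, let x and y be distinct nonadjacent vertices of G, and let Δ be the independence complex of G (the family of all independent sets of G). Then the edge subdivision of Δ at the edge {x,y}, with new vertex a, equals the independence complex of the graph Sub(G; x, y). -/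
/-- The independence complex of a graph `G`: the family of all independent sets of `G`,
viewed as finite sets of vertices. -/
def IndCpx {V : Type*} (G : SimpleGraph V) : Set (Finset V) :=
  {s | ∀ u ∈ s, ∀ v ∈ s, ¬ G.Adj u v}

/-- The edge subdivision of a simplicial complex `Δ` (on vertex set `V`) at the edge
`{x, y}`, with new vertex `a = Sum.inr ()`: its faces are the faces `σ ∈ Δ` with
`{x, y} ⊄ σ`, together with the sets `τ ∪ {a}` where `{x, y} ⊄ τ` and `τ ∪ {x, y} ∈ Δ`. -/
def EdgeSubdiv {V : Type*} [DecidableEq V] (Δ : Set (Finset V)) (x y : V) :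
    Set (Finset (V ⊕ Unit)) :=
  {S | (∃ σ ∈ Δ, ¬ (x ∈ σ ∧ y ∈ σ) ∧ S = σ.image Sum.inl) ∨
       (∃ τ : Finset V, ¬ (x ∈ τ ∧ y ∈ τ) ∧ (τ ∪ {x, y}) ∈ Δ ∧
          S = insert (Sum.inr ()) (τ.image Sum.inl))}

/-- The graph `Sub(G; x, y)` obtained from `G` by adding the edge `xy` together with a new
vertex `a = Sum.inr ()` joined to every neighbor of `x` or `y`. -/
def SubG {V : Type*} (G : SimpleGraph V) (x y : V) (hxy : x ≠ y) :
    SimpleGraph (V ⊕ Unit) where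
  Adj u v :=
    match u, v with
    | Sum.inl u, Sum.inl v => G.Adj u v ∨ (u = x ∧ v = y) ∨ (u = y ∧ v = x)
    | Sum.inl u, Sum.inr _ => G.Adj u x ∨ G.Adj u y
    | Sum.inr _, Sum.inl v => G.Adj v x ∨ G.Adj v y
    | Sum.inr _, Sum.inr _ => False
  symm := by
    constructor
    rintro (u | u) (v | v) h
    · rcases h with h | ⟨h1, h2⟩ | ⟨h1, h2⟩
      · exact Or.inl h.symm
      · exact Or.inr (Or.inr ⟨h2, h1⟩)
      · exact Or.inr (Or.inl ⟨h2, h1⟩)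
    · exact h
    · exact h
    · exact h
  loopless := by
    constructor
    rintro (u | u) h
    · rcases h with h | ⟨h1, h2⟩ | ⟨h1, h2⟩
      · exact G.irrefl h
      · exact hxy (h1.symm.trans h2)
      · exact hxy (h2.symm.trans h1)
    · exact h

/-- For a finite graph `G` and distinct nonadjacent vertices `x, y`, the edge subdivision of
the independence complex of `G` at the edge `{x, y}` is the independence complex of the
graph `Sub(G; x, y)`. -/
theorem edgeSubdiv_indCpx {V : Type*} [Fintype V] [DecidableEq V] (G : SimpleGraph V)
    (x y : V) (hxy : x ≠ y) (hnadj : ¬ G.Adj x y) :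
    EdgeSubdiv (IndCpx G) x y = IndCpx (SubG G x y hxy) := by
  have hadj : ∀ u v, (SubG G x y hxy).Adj u v ↔
      match u, v with
      | Sum.inl u, Sum.inl v => G.Adj u v ∨ (u = x ∧ v = y) ∨ (u = y ∧ v = x)
      | Sum.inl u, Sum.inr _ => G.Adj u x ∨ G.Adj u y
      | Sum.inr _, Sum.inl v => G.Adj v x ∨ G.Adj v y
      | Sum.inr _, Sum.inr _ => False := fun u v => Iff.rfl
  ext S
  constructor
  · rintro (⟨σ, hσ, hxyσ, rfl⟩ | ⟨τ, hxyτ, hτ, rfl⟩)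
    · intro u hu v hv
      simp only [Finset.mem_image] at hu hv
      obtain ⟨u', hu', rfl⟩ := hu
      obtain ⟨v', hv', rfl⟩ := hv
      rw [hadj]
      rintro (h | ⟨rfl, rfl⟩ | ⟨rfl, rfl⟩)
      · exact hσ u' hu' v' hv' h
      · exact hxyσ ⟨hu', hv'⟩
      · exact hxyσ ⟨hv', hu'⟩
    · intro u hu v hv
      have hx : x ∈ τ ∪ ({x, y} : Finset V) := by simp
      have hy : y ∈ τ ∪ ({x, y} : Finset V) := by simp
      have hmem : ∀ w, w ∈ τ → w ∈ τ ∪ ({x, y} : Finset V) := fun w hw =>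
        Finset.mem_union_left _ hw
      rcases Finset.mem_insert.1 hu with rfl | hu <;>
        rcases Finset.mem_insert.1 hv with rfl | hv
      · rw [hadj]; exact id
      · obtain ⟨v', hv', rfl⟩ := Finset.mem_image.1 hv
        rw [hadj]
        rintro (h | h)
        · exact hτ v' (hmem v' hv') x hx h
        · exact hτ v' (hmem v' hv') y hy h
      · obtain ⟨u', hu', rfl⟩ := Finset.mem_image.1 hu
        rw [hadj]
        rintro (h | h)
        · exact hτ u' (hmem u' hu') x hx h
        · exact hτ u' (hmem u' hu') y hy h
      · obtain ⟨u', hu', rfl⟩ := Finset.mem_image.1 hu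
        obtain ⟨v', hv', rfl⟩ := Finset.mem_image.1 hv
        rw [hadj]
        rintro (h | ⟨rfl, rfl⟩ | ⟨rfl, rfl⟩)
        · exact hτ u' (hmem u' hu') v' (hmem v' hv') h
        · exact hxyτ ⟨hu', hv'⟩
        · exact hxyτ ⟨hv', hu'⟩
  · intro hS
    by_cases ha : Sum.inr () ∈ S
    · right
      refine ⟨(S.erase (Sum.inr ())).preimage Sum.inl Sum.inl_injective.injOn, ?_, ?_, ?_⟩
      · rintro ⟨hx', hy'⟩
        simp only [Finset.mem_preimage, Finset.mem_erase] at hx' hy'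
        exact hS _ hx'.2 _ hy'.2 ((hadj _ _).2 (Or.inr (Or.inl ⟨rfl, rfl⟩)))
      · intro u hu v hv h
        have hT : ∀ w, w ∈ (S.erase (Sum.inr ())).preimage Sum.inl Sum.inl_injective.injOn →
            Sum.inl w ∈ S := by
          intro w hw
          simp only [Finset.mem_preimage, Finset.mem_erase] at hw
          exact hw.2
        rcases Finset.mem_union.1 hu with hu | hu <;>
          rcases Finset.mem_union.1 hv with hv | hv
        · exact hS _ (hT u hu) _ (hT v hv) ((hadj _ _).2 (Or.inl h))
        · rcases Finset.mem_insert.1 hv with hv | hv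
          · rw [hv] at h
            exact hS _ (hT u hu) _ ha ((hadj _ _).2 (Or.inl h))
          · rw [Finset.mem_singleton.1 hv] at h
            exact hS _ (hT u hu) _ ha ((hadj _ _).2 (Or.inr h))
        · rcases Finset.mem_insert.1 hu with hu | hu
          · rw [hu] at h
            exact hS _ ha _ (hT v hv) ((hadj _ _).2 (Or.inl h.symm))
          · rw [Finset.mem_singleton.1 hu] at h
            exact hS _ ha _ (hT v hv) ((hadj _ _).2 (Or.inr h.symm))
        · rcases Finset.mem_insert.1 hu with hu | hu <;>
            rcases Finset.mem_insert.1 hv with hv | hv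
          · rw [hu, hv] at h; exact G.irrefl h
          · rw [hu, Finset.mem_singleton.1 hv] at h; exact hnadj h
          · rw [Finset.mem_singleton.1 hu, hv] at h; exact hnadj h.symm
          · rw [Finset.mem_singleton.1 hu, Finset.mem_singleton.1 hv] at h
            exact G.irrefl h
      · ext w
        rcases w with v | u
        · simp only [Finset.mem_insert, Finset.mem_image, Finset.mem_preimage,
            Finset.mem_erase]
          constructor
          · intro h
            exact Or.inr ⟨v, ⟨by simp, h⟩, rfl⟩
          · rintro (h | ⟨w, ⟨_, hw⟩, hwv⟩)
            · exact absurd h (by simp)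
            · obtain rfl := Sum.inl_injective hwv
              exact hw
        · cases u
          simp [ha]
    · left
      refine ⟨S.preimage Sum.inl Sum.inl_injective.injOn, ?_, ?_, ?_⟩
      · intro u hu v hv h
        simp only [Finset.mem_preimage] at hu hv
        exact hS _ hu _ hv ((hadj _ _).2 (Or.inl h))
      · rintro ⟨hx', hy'⟩
        simp only [Finset.mem_preimage] at hx' hy'
        exact hS _ hx' _ hy' ((hadj _ _).2 (Or.inr (Or.inl ⟨rfl, rfl⟩)))
      · ext w
        rcases w with v | u
        · simp
        · cases u
          simp [ha]
end

section
/- For every m ≥ 1, the independence complex of G_m is vertex decomposable. -/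
set_option linter.unusedSectionVars false


/-- `s` is a facet (maximal face) of the complex `Δ`. -/
def IsFacet {V : Type*} (Δ : Set (Finset V)) (s : Finset V) : Prop :=
  s ∈ Δ ∧ ∀ t ∈ Δ, s ⊆ t → s = t

/-- A complex is pure if all its facets have the same cardinality. -/
def PureCpx {V : Type*} (Δ : Set (Finset V)) : Prop :=
  ∀ s t : Finset V, IsFacet Δ s → IsFacet Δ t → s.card = t.card

/-- The link of a vertex `v` in the complex `Δ`. -/
def linkCpx {V : Type*} [DecidableEq V] (Δ : Set (Finset V)) (v : V) : Set (Finset V) :=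
  {t | v ∉ t ∧ insert v t ∈ Δ}

/-- The deletion of a vertex `v` from the complex `Δ`. -/
def delCpx {V : Type*} (Δ : Set (Finset V)) (v : V) : Set (Finset V) :=
  {t ∈ Δ | v ∉ t}

/-- Vertex decomposability: `Δ` is a simplex (the family of all subsets of a finite set,
or the empty complex), or there is a vertex `v` of `Δ` whose link and deletion are both
pure and vertex decomposable. -/
inductive VertexDecomposable {V : Type*} [DecidableEq V] : Set (Finset V) → Prop
  | of_empty : VertexDecomposable ∅
  | of_simplex (s : Finset V) : VertexDecomposable {t : Finset V | t ⊆ s}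
  | step (Δ : Set (Finset V)) (v : V) (hv : {v} ∈ Δ)
      (hlp : PureCpx (linkCpx Δ v)) (hl : VertexDecomposable (linkCpx Δ v))
      (hdp : PureCpx (delCpx Δ v)) (hd : VertexDecomposable (delCpx Δ v)) :
      VertexDecomposable Δ

/-! ### Generic machinery -/

section Generic

variable {V : Type*} [DecidableEq V]

/-- `Δ` is pure with all facets of cardinality `n`. -/
def PureOfSize (Δ : Set (Finset V)) (n : ℕ) : Prop :=
  ∀ s, IsFacet Δ s → s.card = n

lemma PureOfSize.pureCpx {Δ : Set (Finset V)} {n : ℕ} (h : PureOfSize Δ n) :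
    PureCpx Δ := fun s t hs ht => (h s hs).trans (h t ht).symm

lemma pure_step {Δ : Set (Finset V)} (v : V) {n : ℕ}
    (hl : PureOfSize (linkCpx Δ v) n)
    (hd : ∀ s, IsFacet (delCpx Δ v) s → s ∈ linkCpx Δ v ∨ s.card = n + 1) :
    PureOfSize Δ (n + 1) := by
  intro s hs
  by_cases hv : v ∈ s
  · have hface : IsFacet (linkCpx Δ v) (s.erase v) := by
      refine ⟨⟨Finset.notMem_erase _ _, by rw [Finset.insert_erase hv]; exact hs.1⟩, ?_⟩
      intro t ht hsub
      have h1 : s ⊆ insert v t := by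
        rw [← Finset.insert_erase hv]
        exact Finset.insert_subset_insert _ hsub
      have h2 : s = insert v t := hs.2 _ ht.2 h1
      rw [h2, Finset.erase_insert ht.1]
    have := hl _ hface
    have hc := Finset.card_erase_of_mem hv
    have : 0 < s.card := Finset.card_pos.2 ⟨v, hv⟩
    omega
  · have hface : IsFacet (delCpx Δ v) s := by
      refine ⟨⟨hs.1, hv⟩, fun t ht hsub => hs.2 _ ht.1 hsub⟩
    rcases hd _ hface with h | h
    · exfalso
      have : s = insert v s := hs.2 _ h.2 (Finset.subset_insert _ _)
      exact hv (this ▸ Finset.mem_insert_self v s)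
    · exact h

variable [Fintype V] (G : SimpleGraph V) [DecidableRel G.Adj]

/-- Faces of the independence complex contained in the allowed set `R`. -/
def cpx (R : Finset V) : Set (Finset V) :=
  {t | t ⊆ R ∧ ∀ u ∈ t, ∀ v ∈ t, ¬ G.Adj u v}

/-- The closed neighbourhood of `v` as a `Finset`. -/
def cnbhd (v : V) : Finset V :=
  Finset.univ.filter (fun u => u = v ∨ G.Adj u v)

lemma link_cpx {R : Finset V} {v : V} (hv : v ∈ R) :
    linkCpx (cpx G R) v = cpx G (R \ cnbhd G v) := by
  ext t
  simp only [linkCpx, cpx, cnbhd, Set.mem_setOf_eq, Finset.subset_iff,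
    Finset.mem_sdiff, Finset.mem_filter, Finset.mem_univ, true_and,
    Finset.mem_insert]
  constructor
  · rintro ⟨hvt, hsub, hind⟩
    refine ⟨fun {u} hu => ⟨hsub (Or.inr hu), ?_⟩, fun u hu w hw =>
      hind u (Or.inr hu) w (Or.inr hw)⟩
    rintro (rfl | hadj)
    · exact hvt hu
    · exact hind u (Or.inr hu) v (Or.inl rfl) hadj
  · rintro ⟨hsub, hind⟩
    refine ⟨fun hvt => (hsub hvt).2 (Or.inl rfl), ?_, ?_⟩
    · rintro u (rfl | hu)
      · exact hv
      · exact (hsub hu).1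
    · rintro u (rfl | hu) w (rfl | hw)
      · exact G.loopless.irrefl _
      · exact fun h => (hsub hw).2 (Or.inr h.symm)
      · exact fun h => (hsub hu).2 (Or.inr h)
      · exact hind u hu w hw

lemma del_cpx {R : Finset V} {v : V} :
    delCpx (cpx G R) v = cpx G (R \ {v}) := by
  ext t
  simp only [delCpx, cpx, Set.mem_setOf_eq, Finset.subset_iff, Finset.mem_sdiff,
    Finset.mem_singleton]
  constructor
  · rintro ⟨⟨hsub, hind⟩, hvt⟩
    exact ⟨fun {u} hu => ⟨hsub hu, fun h => hvt (h ▸ hu)⟩, hind⟩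
  · rintro ⟨hsub, hind⟩
    refine ⟨⟨fun {u} hu => (hsub hu).1, hind⟩, fun hvt => (hsub hvt).2 rfl⟩

lemma isFacet_cpx {R : Finset V} {s : Finset V} :
    IsFacet (cpx G R) s ↔ s ∈ cpx G R ∧ ∀ w ∈ R, w ∉ s → ∃ u ∈ s, G.Adj u w := by
  constructor
  · rintro ⟨hs, hmax⟩
    refine ⟨hs, fun w hwR hws => ?_⟩
    by_contra hno
    push_neg at hno
    have hmem : insert w s ∈ cpx G R := by
      refine ⟨Finset.insert_subset hwR hs.1, ?_⟩
      rintro u hu x hx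
      rcases Finset.mem_insert.1 hu with rfl | hu'
      · rcases Finset.mem_insert.1 hx with rfl | hx'
        · exact G.loopless.irrefl _
        · exact fun h => hno x hx' h.symm
      · rcases Finset.mem_insert.1 hx with rfl | hx'
        · exact fun h => hno u hu' h
        · exact hs.2 u hu' x hx'
    have := hmax _ hmem (Finset.subset_insert _ _)
    exact hws (this ▸ Finset.mem_insert_self w s)
  · rintro ⟨hs, hext⟩
    refine ⟨hs, fun t ht hsub => ?_⟩
    by_contra hne
    obtain ⟨w, hwt, hws⟩ := Finset.exists_of_ssubset (lt_of_le_of_ne hsub hne)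
    obtain ⟨u, hus, hadj⟩ := hext w (ht.1 hwt) hws
    exact ht.2 u (hsub hus) w hwt hadj

/-- Combined statement: the complex of `R` is pure of size `n` and vertex decomposable. -/
def GoodC (R : Finset V) (n : ℕ) : Prop :=
  PureOfSize (cpx G R) n ∧ VertexDecomposable (cpx G R)

lemma simplex_good {R : Finset V} (h : ∀ u ∈ R, ∀ v ∈ R, ¬ G.Adj u v) :
    GoodC G R R.card := by
  have hcpx : cpx G R = {t : Finset V | t ⊆ R} := by
    ext t
    simp only [cpx, Set.mem_setOf_eq, and_iff_left_iff_imp]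
    exact fun hsub u hu v hv => h u (hsub hu) v (hsub hv)
  constructor
  · intro s hs
    have hR : R ∈ cpx G R := ⟨le_refl _, h⟩
    have := hs.2 R hR (hcpx ▸ hs.1 : s ∈ {t : Finset V | t ⊆ R})
    rw [this]
  · rw [hcpx]
    exact VertexDecomposable.of_simplex R

lemma shed_good {R : Finset V} {v : V} (hv : v ∈ R) {n : ℕ}
    (hl : GoodC G (R \ cnbhd G v) n) (hd : GoodC G (R \ {v}) (n + 1)) :
    GoodC G R (n + 1) := by
  have hlink : linkCpx (cpx G R) v = cpx G (R \ cnbhd G v) := link_cpx G hv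
  have hdel : delCpx (cpx G R) v = cpx G (R \ {v}) := del_cpx G
  constructor
  · exact pure_step v (hlink ▸ hl.1) (fun s hs => Or.inr (hd.1 s (hdel ▸ hs)))
  · refine VertexDecomposable.step _ v ⟨Finset.singleton_subset_iff.2 hv, ?_⟩
      (hlink ▸ hl.1.pureCpx) (hlink ▸ hl.2) (hdel ▸ hd.1.pureCpx) (hdel ▸ hd.2)
    intro u hu w hw
    rw [Finset.mem_singleton] at hu hw
    subst hu; subst hw
    exact G.loopless.irrefl _

lemma cone_good {S : Finset V} {v : V} (hv : v ∉ S)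
    (hiso : ∀ u ∈ S, ¬ G.Adj u v) {n : ℕ} (h : GoodC G S n) :
    GoodC G (insert v S) (n + 1) := by
  have hvR : v ∈ insert v S := Finset.mem_insert_self v S
  have hlset : insert v S \ cnbhd G v = S := by
    ext u
    simp only [Finset.mem_sdiff, Finset.mem_insert, cnbhd, Finset.mem_filter,
      Finset.mem_univ, true_and, not_or]
    constructor
    · rintro ⟨rfl | hu, hne, _⟩
      · exact absurd rfl hne
      · exact hu
    · intro hu
      exact ⟨Or.inr hu, fun h' => hv (h' ▸ hu), hiso u hu⟩
  have hdset : insert v S \ {v} = S := by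
    ext u
    simp only [Finset.mem_sdiff, Finset.mem_insert, Finset.mem_singleton]
    constructor
    · rintro ⟨rfl | hu, hne⟩
      · exact absurd rfl hne
      · exact hu
    · intro hu
      exact ⟨Or.inr hu, fun h' => hv (h' ▸ hu)⟩
  have hlink : linkCpx (cpx G (insert v S)) v = cpx G S := by
    rw [link_cpx G hvR, hlset]
  have hdel : delCpx (cpx G (insert v S)) v = cpx G S := by
    rw [del_cpx G, hdset]
  constructor
  · refine pure_step v (hlink ▸ h.1) (fun s hs => Or.inl ?_)
    rw [hlink]
    rw [hdel] at hs
    exact hs.1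
  · refine VertexDecomposable.step _ v ⟨Finset.singleton_subset_iff.2 hvR, ?_⟩
      (hlink ▸ h.1.pureCpx) (hlink ▸ h.2) (hdel ▸ h.1.pureCpx) (hdel ▸ h.2)
    intro u hu w hw
    rw [Finset.mem_singleton] at hu hw
    subst hu; subst hw
    exact G.loopless.irrefl _

end Generic

/-! ### The states of the induction -/

/-- Allowed-set `A k`: the full graph `G_k` (columns `1..k`). -/
def pSA (m k : ℕ) : GV m → Bool
  | Sum.inl i => decide (i.val < k)
  | Sum.inr (Sum.inl i) => decide (i.val < k)
  | Sum.inr (Sum.inr j) => decide (j.val + 1 < k)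

/-- Allowed-set `B k`: `G_k` minus `c_k`. -/
def pSB (m k : ℕ) : GV m → Bool
  | Sum.inl i => decide (i.val < k)
  | Sum.inr (Sum.inl i) => decide (i.val < k)
  | Sum.inr (Sum.inr j) => decide (j.val + 2 < k)

/-- Allowed-set `C k`: columns `1..k-2` full, plus `a_{k-1}, c_{k-1}, a_k`. -/
def pSC (m k : ℕ) : GV m → Bool
  | Sum.inl i => decide (i.val < k)
  | Sum.inr (Sum.inl i) => decide (i.val + 2 < k)
  | Sum.inr (Sum.inr j) => decide (j.val + 2 < k)

/-- Allowed-set `D k`: `G_k` minus `b_k`. -/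
def pSD (m k : ℕ) : GV m → Bool
  | Sum.inl i => decide (i.val < k)
  | Sum.inr (Sum.inl i) => decide (i.val + 1 < k)
  | Sum.inr (Sum.inr j) => decide (j.val + 1 < k)

def SA (m k : ℕ) : Finset (GV m) := Finset.univ.filter (fun x => pSA m k x = true)
def SB (m k : ℕ) : Finset (GV m) := Finset.univ.filter (fun x => pSB m k x = true)
def SC (m k : ℕ) : Finset (GV m) := Finset.univ.filter (fun x => pSC m k x = true)
def SD (m k : ℕ) : Finset (GV m) := Finset.univ.filter (fun x => pSD m k x = true)

lemma mem_SA {m k : ℕ} {x : GV m} : x ∈ SA m k ↔ pSA m k x = true :=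
  Finset.mem_filter.trans (and_iff_right (Finset.mem_univ _))

lemma mem_SB {m k : ℕ} {x : GV m} : x ∈ SB m k ↔ pSB m k x = true :=
  Finset.mem_filter.trans (and_iff_right (Finset.mem_univ _))

lemma mem_SC {m k : ℕ} {x : GV m} : x ∈ SC m k ↔ pSC m k x = true :=
  Finset.mem_filter.trans (and_iff_right (Finset.mem_univ _))

lemma mem_SD {m k : ℕ} {x : GV m} : x ∈ SD m k ↔ pSD m k x = true :=
  Finset.mem_filter.trans (and_iff_right (Finset.mem_univ _))

lemma main_induction (m : ℕ) : ∀ k : ℕ, k ≤ m →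
    GoodC (Gm m) (SA m k) k ∧
    (1 ≤ k → GoodC (Gm m) (SD m k) k) ∧
    (2 ≤ k → GoodC (Gm m) (SC m k) (k - 1) ∧ GoodC (Gm m) (SB m k) k) := by
  intro k
  induction k using Nat.strong_induction_on with
  | _ k IH =>
  intro hkm
  rcases k with _ | (_ | n)
  · -- k = 0
    have h0 : SA m 0 = ∅ := by
      ext x; rcases x with i | i | j <;> simp [mem_SA, pSA]
    have := simplex_good (Gm m) (R := SA m 0) (by simp [h0])
    rw [h0] at this ⊢
    exact ⟨by simpa using this, by omega, by omega⟩
  · -- k = 1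
    have hm1 : 0 < m := hkm
    have hA0 : GoodC (Gm m) (SA m 0) 0 := by
      have h0 : SA m 0 = ∅ := by
        ext x; rcases x with i | i | j <;> simp [mem_SA, pSA]
      have := simplex_good (Gm m) (R := SA m 0) (by simp [h0])
      simpa [h0] using this
    refine ⟨?_, fun _ => ?_, by omega⟩
    · -- A 1 : shed a_1
      have hv : aV (⟨0, hm1⟩ : Fin m) ∈ SA m 1 := by
        simp [mem_SA, pSA, aV]
      have elink : SA m 1 \ cnbhd (Gm m) (aV (⟨0, hm1⟩ : Fin m)) = SA m 0 := by
        ext x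
        rcases x with i | i | j <;>
          simp [mem_SA, pSA, cnbhd, aV, Gm, adjHalf, Fin.ext_iff] <;> omega
      have edel : SA m 1 \ {aV (⟨0, hm1⟩ : Fin m)} = {bV (⟨0, hm1⟩ : Fin m)} := by
        ext x
        rcases x with i | i | j <;>
          simp [mem_SA, pSA, aV, bV, Fin.ext_iff] <;> omega
      have hdel : GoodC (Gm m) (SA m 1 \ {aV (⟨0, hm1⟩ : Fin m)}) 1 := by
        rw [edel]
        have := simplex_good (Gm m) (R := {bV (⟨0, hm1⟩ : Fin m)}) ?_
        · simpa using this
        · intro u hu w hw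
          rw [Finset.mem_singleton] at hu hw
          subst hu; subst hw
          exact (Gm m).loopless.irrefl _
      have hlink : GoodC (Gm m) (SA m 1 \ cnbhd (Gm m) (aV (⟨0, hm1⟩ : Fin m))) 0 := by
        rw [elink]; exact hA0
      exact shed_good (Gm m) hv hlink hdel
    · -- D 1 : a single vertex
      have e : SD m 1 = {aV (⟨0, hm1⟩ : Fin m)} := by
        ext x
        rcases x with i | i | j <;>
          simp [mem_SD, pSD, aV, Fin.ext_iff] <;> omega
      rw [e]
      have := simplex_good (Gm m) (R := {aV (⟨0, hm1⟩ : Fin m)}) ?_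
      · simpa using this
      · intro u hu w hw
        rw [Finset.mem_singleton] at hu hw
        subst hu; subst hw
        exact (Gm m).loopless.irrefl _
  · -- k = n + 2
    have hnm : n + 2 ≤ m := hkm
    have hA0 : GoodC (Gm m) (SA m n) n := (IH n (by omega) (by omega)).1
    have hA1 : GoodC (Gm m) (SA m (n + 1)) (n + 1) := (IH (n + 1) (by omega) (by omega)).1
    have hD1 : GoodC (Gm m) (SD m (n + 1)) (n + 1) :=
      (IH (n + 1) (by omega) (by omega)).2.1 (by omega)
    have ha1 : n + 1 < m := by omega
    have han : n < m := by omega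
    have hcn : n < m - 1 := by omega
    -- C (n+2) : shed a_{n+2}
    have hC : GoodC (Gm m) (SC m (n + 2)) (n + 1) := by
      have hv : aV (⟨n + 1, ha1⟩ : Fin m) ∈ SC m (n + 2) := by
        simp [mem_SC, pSC, aV]
      have elink : SC m (n + 2) \ cnbhd (Gm m) (aV (⟨n + 1, ha1⟩ : Fin m)) = SA m n := by
        ext x
        rcases x with i | i | j <;>
          simp [mem_SC, pSC, mem_SA, pSA, cnbhd, aV, Gm, adjHalf, Fin.ext_iff] <;> omega
      have edel : SC m (n + 2) \ {aV (⟨n + 1, ha1⟩ : Fin m)} = SD m (n + 1) := by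
        ext x
        rcases x with i | i | j <;>
          simp [mem_SC, pSC, mem_SD, pSD, aV, Fin.ext_iff] <;> omega
      refine shed_good (Gm m) hv ?_ ?_
      · rw [elink]; exact hA0
      · rw [edel]; exact hD1
    -- D (n+2) : shed b_{n+1}
    have hD : GoodC (Gm m) (SD m (n + 2)) (n + 2) := by
      have hv : bV (⟨n, han⟩ : Fin m) ∈ SD m (n + 2) := by
        simp [mem_SD, pSD, bV]
      have elink : SD m (n + 2) \ cnbhd (Gm m) (bV (⟨n, han⟩ : Fin m)) =
          insert (aV (⟨n + 1, ha1⟩ : Fin m)) (SA m n) := by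
        ext x
        rcases x with i | i | j <;>
          simp [mem_SD, pSD, mem_SA, pSA, cnbhd, aV, bV, Gm, adjHalf, Fin.ext_iff] <;> omega
      have edel : SD m (n + 2) \ {bV (⟨n, han⟩ : Fin m)} =
          insert (cV (⟨n, hcn⟩ : Fin (m - 1))) (SC m (n + 2)) := by
        ext x
        rcases x with i | i | j <;>
          simp [mem_SD, pSD, mem_SC, pSC, bV, cV, Fin.ext_iff] <;> omega
      refine shed_good (Gm m) hv ?_ ?_
      · rw [elink]
        refine cone_good (Gm m) ?_ ?_ hA0
        · simp [mem_SA, pSA, aV]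
        · intro u hu
          rcases u with i | i | j <;>
            simp [mem_SA, pSA, aV, Gm, adjHalf, Fin.ext_iff] at hu ⊢ <;> omega
      · rw [edel]
        refine cone_good (Gm m) ?_ ?_ hC
        · simp [mem_SC, pSC, cV]
        · intro u hu
          rcases u with i | i | j <;>
            simp [mem_SC, pSC, cV, Gm, adjHalf, Fin.ext_iff] at hu ⊢ <;> omega
    -- B (n+2) : shed a_{n+2}
    have hB : GoodC (Gm m) (SB m (n + 2)) (n + 2) := by
      have hv : aV (⟨n + 1, ha1⟩ : Fin m) ∈ SB m (n + 2) := by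
        simp [mem_SB, pSB, aV]
      have elink : SB m (n + 2) \ cnbhd (Gm m) (aV (⟨n + 1, ha1⟩ : Fin m)) =
          insert (bV (⟨n, han⟩ : Fin m)) (SA m n) := by
        ext x
        rcases x with i | i | j <;>
          simp [mem_SB, pSB, mem_SA, pSA, cnbhd, aV, bV, Gm, adjHalf, Fin.ext_iff] <;> omega
      have edel : SB m (n + 2) \ {aV (⟨n + 1, ha1⟩ : Fin m)} =
          insert (bV (⟨n + 1, ha1⟩ : Fin m)) (SA m (n + 1)) := by
        ext x
        rcases x with i | i | j <;>
          simp [mem_SB, pSB, mem_SA, pSA, aV, bV, Fin.ext_iff] <;> omega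
      refine shed_good (Gm m) hv ?_ ?_
      · rw [elink]
        refine cone_good (Gm m) ?_ ?_ hA0
        · simp [mem_SA, pSA, bV]
        · intro u hu
          rcases u with i | i | j <;>
            simp [mem_SA, pSA, bV, Gm, adjHalf, Fin.ext_iff] at hu ⊢ <;> omega
      · rw [edel]
        refine cone_good (Gm m) ?_ ?_ hA1
        · simp [mem_SA, pSA, bV]
        · intro u hu
          rcases u with i | i | j <;>
            simp [mem_SA, pSA, bV, Gm, adjHalf, Fin.ext_iff] at hu ⊢ <;> omega
    -- A (n+2) : shed c_{n+2}
    have hA : GoodC (Gm m) (SA m (n + 2)) (n + 2) := by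
      have hv : cV (⟨n, hcn⟩ : Fin (m - 1)) ∈ SA m (n + 2) := by
        simp [mem_SA, pSA, cV]
      have elink : SA m (n + 2) \ cnbhd (Gm m) (cV (⟨n, hcn⟩ : Fin (m - 1))) =
          SC m (n + 2) := by
        ext x
        rcases x with i | i | j <;>
          (try have := i.isLt) <;> (try have := j.isLt) <;>
          simp [mem_SA, pSA, mem_SC, pSC, cnbhd, cV, Gm, adjHalf, Fin.ext_iff] <;> omega
      have edel : SA m (n + 2) \ {cV (⟨n, hcn⟩ : Fin (m - 1))} = SB m (n + 2) := by
        ext x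
        rcases x with i | i | j <;>
          simp [mem_SA, pSA, mem_SB, pSB, cV, Fin.ext_iff] <;> omega
      refine shed_good (Gm m) hv ?_ ?_
      · rw [elink]; exact hC
      · rw [edel]; exact hB
    exact ⟨hA, fun _ => hD, fun _ => ⟨hC, hB⟩⟩

/-- For every `m ≥ 1`, the independence complex of `Gₘ` is (pure and) vertex
decomposable. -/
theorem Gm_indCpx_vertexDecomposable (m : ℕ) (hm : 1 ≤ m) :
    PureCpx (IndCpx (Gm m)) ∧ VertexDecomposable (IndCpx (Gm m)) := by
  have h := (main_induction m m le_rfl).1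
  have huniv : SA m m = Finset.univ := by
    ext x
    rcases x with i | i | j <;>
      (try have := i.isLt) <;> (try have := j.isLt) <;>
      simp [mem_SA, pSA] <;> omega
  have hcpx : IndCpx (Gm m) = cpx (Gm m) (SA m m) := by
    rw [huniv]
    ext t
    simp [IndCpx, cpx, Finset.subset_univ]
  rw [hcpx]
  exact ⟨h.1.pureCpx, h.2⟩
end
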